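/- For the matrix factorisation D_a = [[0, x^{n-a}],[-x^a, 0]] of -x^n, the matrices e_i = x^i·I₂ for 0 ≤ i ≤ min(a-1, n-a-1) are even cocycles: [D_a, e_i] = D_a e_i - e_i D_a = 0, and they are linearly independent over ℂ in the cohomology of the BRST differential d(φ) = D_aφ - (-1)^{|φ|}φD_a, i.e. no nontrivial ℂ-linear combination of them lies in the image of d. -/

import Mathlib

open Polynomial

/-! Taking the `(0,0)` entry of `D_a φ + φ D_a` for odd `φ = [[0,p],[q,0]]` gives
`x^{n-a} q - p x^a`, which is divisible by `x^{min a (n-a)}`; but the `(0,0)` entry of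
`∑ cᵢ xⁱ · 1` is a polynomial of degree `< min a (n-a)` with coefficients `cᵢ`. -/

theorem Matrix.antidiag_mul_add_mul_apply_zero_zero {R : Type*} [NonUnitalNonAssocSemiring R] (u v p q : R) :
    (!![0, u; v, 0] * !![0, p; q, 0] + !![0, p; q, 0] * !![0, u; v, 0]) 0 0 = u * q + p * v := by
  simp

theorem Polynomial.coeff_sum_fin_C_mul_X_pow {R : Type*} [Semiring R] {m : ℕ}
    (c : Fin m → R) (i : Fin m) : (∑ j : Fin m, C (c j) * X ^ (j : ℕ)).coeff i = c i := by
  simp [Fin.val_inj]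

theorem stmt9_general (n a : ℕ) :
    (∀ i : ℕ, i ≤ min (a - 1) (n - a - 1) →
      !![0, (X : ℂ[X]) ^ (n - a); -(X ^ a), 0] * ((X ^ i : ℂ[X]) • 1)
        = ((X ^ i : ℂ[X]) • 1) * !![0, (X : ℂ[X]) ^ (n - a); -(X ^ a), 0]) ∧
    (∀ c : Fin (min a (n - a)) → ℂ, ∀ p q : ℂ[X],
      (∑ i : Fin (min a (n - a)),
          (C (c i) * X ^ (i : ℕ)) • (1 : Matrix (Fin 2) (Fin 2) ℂ[X]))
        = !![0, (X : ℂ[X]) ^ (n - a); -(X ^ a), 0] * !![0, p; q, 0]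
          + !![0, p; q, 0] * !![0, (X : ℂ[X]) ^ (n - a); -(X ^ a), 0] →
      ∀ i, c i = 0) := by
  refine ⟨fun i _ => ((Commute.one_right _).smul_right _).eq, fun c p q heq i => ?_⟩
  have h00 := congrFun₂ heq 0 0
  rw [← Finset.sum_smul, Matrix.smul_apply, Matrix.one_apply_eq, smul_eq_mul, mul_one,
    Matrix.antidiag_mul_add_mul_apply_zero_zero] at h00
  have hdvd : X ^ min a (n - a) ∣ ∑ j : Fin (min a (n - a)), C (c j) * X ^ (j : ℕ) := by
    rw [h00]
    exact dvd_add (dvd_mul_of_dvd_left (pow_dvd_pow X (min_le_right _ _)) _)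
      (dvd_mul_of_dvd_right (dvd_neg.mpr (pow_dvd_pow X (min_le_left _ _))) _)
  rw [← coeff_sum_fin_C_mul_X_pow c i]
  exact X_pow_dvd_iff.mp hdvd i i.2

/-- For the matrix factorisation `D_a = [[0, x^{n-a}],[-x^a, 0]]` of `-xⁿ`,
the even matrices `e_i = xⁱ·1` for `0 ≤ i ≤ min(a-1, n-a-1)` are cocycles,
`[D_a, e_i] = 0`, and they are linearly independent in BRST cohomology: if a ℂ-linear
combination of them lies in the image of the differential on odd elements
`φ ↦ D_a φ + φ D_a`, then all coefficients vanish. -/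
theorem stmt9 (n a : ℕ) (h1 : 1 ≤ a) (h2 : a ≤ n - 1) :
    (∀ i : ℕ, i ≤ min (a - 1) (n - a - 1) →
      !![0, (X : ℂ[X]) ^ (n - a); -(X ^ a), 0] * ((X ^ i : ℂ[X]) • 1)
        = ((X ^ i : ℂ[X]) • 1) * !![0, (X : ℂ[X]) ^ (n - a); -(X ^ a), 0]) ∧
    (∀ c : Fin (min a (n - a)) → ℂ, ∀ p q : ℂ[X],
      (∑ i : Fin (min a (n - a)),
          (C (c i) * X ^ (i : ℕ)) • (1 : Matrix (Fin 2) (Fin 2) ℂ[X]))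
        = !![0, (X : ℂ[X]) ^ (n - a); -(X ^ a), 0] * !![0, p; q, 0]
          + !![0, p; q, 0] * !![0, (X : ℂ[X]) ^ (n - a); -(X ^ a), 0] →
      ∀ i, c i = 0) :=
  stmt9_general n a
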